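/- arXiv:2002.02516 — 5 statements merged into one kernel-verified Lean document; each statement's English description precedes it below -/
import Mathlib

section
/- Let N, m, ℓ be natural numbers with 3 ≤ ℓ, let F be a field satisfying ringChar F = 0 or ℓ + 2 ≤ ringChar F, and let Cl : Fin m → Fin 3 → (Fin N × Bool) encode a 3-CNF formula in which the three variables of each clause are pairwise distinct. Then Cl is satisfiable if and only if there exists a finset S : Finset I such that φ_ℓ(S) = t, i.e., such that for every coordinate c : Fin (1+N+m) one has ∑_{T ∈ S.powersetCard ℓ} ∏_{e ∈ T} a e c = 1. -/
open Finset

/-- The first coordinate of the Subset-φ instance. -/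
def coord0 (N m : ℕ) : Fin (1 + N + m) := ⟨0, by omega⟩

/-- The coordinate of variable `x_i`. -/
def coordVar (N m : ℕ) (i : Fin N) : Fin (1 + N + m) :=
  ⟨1 + i.val, by have := i.isLt; omega⟩

/-- The coordinate of clause `C_j`. -/
def coordCl (N m : ℕ) (j : Fin m) : Fin (1 + N + m) :=
  ⟨1 + N + j.val, by have := j.isLt; omega⟩

/-- The elements of the Subset-`φ_ℓ` instance constructed from a 3-CNF formula `Cl`:
`Sum.inl 0` is `α_0` (value 1 at coordinate 0); `Sum.inl k` with `k ≠ 0` is `α_k`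
(value 1 at coordinate 0 and at every variable coordinate); `Sum.inr (Sum.inl (i,b))`
is the literal element of `(i,b)` (value 1 at the variable coordinate of `x_i` and
at the clause coordinate of every clause containing the literal `(i,b)`); and
`Sum.inr (Sum.inr (j,k))` is the clause gadget `c_j^k` (value 1 at the clause
coordinate of `C_j`). -/
def subsetPhiElem (F : Type*) [Field F] (N m ℓ : ℕ)
    (Cl : Fin m → Fin 3 → (Fin N × Bool)) :
    (Fin ℓ ⊕ ((Fin N × Bool) ⊕ (Fin m × Fin (ℓ - 1)))) → Fin (1 + N + m) → F
  | Sum.inl k, c =>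
      if c = coord0 N m then 1
      else if k.val ≠ 0 ∧ ∃ i : Fin N, c = coordVar N m i then 1
      else 0
  | Sum.inr (Sum.inl (i, b)), c =>
      if c = coordVar N m i then 1
      else if ∃ j : Fin m, c = coordCl N m j ∧ ∃ k : Fin 3, Cl j k = (i, b) then 1
      else 0
  | Sum.inr (Sum.inr (j, _)), c =>
      if c = coordCl N m j then 1 else 0

section Aux

variable {F : Type*} [Field F] {N m ℓ : ℕ} (Cl : Fin m → Fin 3 → (Fin N × Bool))

attribute [local instance] Classical.propDecidable

private lemma var_ne_coord0 (i : Fin N) : coordVar N m i ≠ coord0 N m := by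
  simp only [coordVar, coord0, Ne, Fin.mk.injEq]; omega

private lemma cl_ne_coord0 (j : Fin m) : coordCl N m j ≠ coord0 N m := by
  simp only [coordCl, coord0, Ne, Fin.mk.injEq]; omega

private lemma coord0_ne_var (i : Fin N) : coord0 N m ≠ coordVar N m i :=
  (var_ne_coord0 i).symm

private lemma coord0_ne_cl (j : Fin m) : coord0 N m ≠ coordCl N m j :=
  (cl_ne_coord0 j).symm

private lemma var_ne_cl (i : Fin N) (j : Fin m) : coordVar N m i ≠ coordCl N m j := by
  have := i.isLt
  simp only [coordVar, coordCl, Ne, Fin.mk.injEq]; omega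

private lemma cl_ne_var (i : Fin N) (j : Fin m) : coordCl N m j ≠ coordVar N m i :=
  (var_ne_cl i j).symm

private lemma var_inj : Function.Injective (coordVar N m) := by
  intro i i' h
  rw [Fin.ext_iff] at h ⊢
  simpa [coordVar] using h

private lemma cl_inj : Function.Injective (coordCl N m) := by
  intro j j' h
  rw [Fin.ext_iff] at h ⊢
  simpa [coordCl] using h

private lemma coord_cases (c : Fin (1 + N + m)) :
    c = coord0 N m ∨ (∃ i : Fin N, c = coordVar N m i) ∨ ∃ j : Fin m, c = coordCl N m j := by
  rcases c with ⟨v, hv⟩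
  rcases Nat.lt_or_ge v 1 with h | h
  · left; exact Fin.ext (by simpa [coord0] using by omega)
  · rcases Nat.lt_or_ge v (1 + N) with h2 | h2
    · exact Or.inr (Or.inl ⟨⟨v - 1, by omega⟩, Fin.ext (by simp [coordVar]; omega)⟩)
    · exact Or.inr (Or.inr ⟨⟨v - (1 + N), by omega⟩, Fin.ext (by simp [coordCl]; omega)⟩)

private lemma elem01 (e : Fin ℓ ⊕ ((Fin N × Bool) ⊕ (Fin m × Fin (ℓ - 1))))
    (c : Fin (1 + N + m)) :
    subsetPhiElem F N m ℓ Cl e c = 0 ∨ subsetPhiElem F N m ℓ Cl e c = 1 := by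
  rcases e with k | ⟨⟨i, b⟩ | ⟨j, k⟩⟩ <;> simp only [subsetPhiElem] <;> split_ifs <;> simp

private lemma one_coord0 (e : Fin ℓ ⊕ ((Fin N × Bool) ⊕ (Fin m × Fin (ℓ - 1)))) :
    subsetPhiElem F N m ℓ Cl e (coord0 N m) = 1 ↔ ∃ k : Fin ℓ, e = Sum.inl k := by
  rcases e with k | ⟨⟨i, b⟩ | ⟨j, k⟩⟩ <;>
    simp [subsetPhiElem, coord0_ne_var, coord0_ne_cl]

private lemma one_coordVar (i : Fin N) (e : Fin ℓ ⊕ ((Fin N × Bool) ⊕ (Fin m × Fin (ℓ - 1)))) :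
    subsetPhiElem F N m ℓ Cl e (coordVar N m i) = 1 ↔
      (∃ k : Fin ℓ, k.val ≠ 0 ∧ e = Sum.inl k) ∨ ∃ b : Bool, e = Sum.inr (Sum.inl (i, b)) := by
  rcases e with k | ⟨⟨i', b⟩ | ⟨j, k⟩⟩
  · have hex : ∃ i₂ : Fin N, coordVar N m i = coordVar N m i₂ := ⟨i, rfl⟩
    by_cases hk : k.val = 0 <;>
      simp [subsetPhiElem, var_ne_coord0, hex, hk]
  · by_cases hii : i' = i
    · subst hii
      simp [subsetPhiElem]
    · have : coordVar N m i ≠ coordVar N m i' := fun h => hii (var_inj h).symm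
      simp [subsetPhiElem, this, var_ne_cl, hii]
  · simp [subsetPhiElem, var_ne_cl]

private lemma one_coordCl (j : Fin m) (e : Fin ℓ ⊕ ((Fin N × Bool) ⊕ (Fin m × Fin (ℓ - 1)))) :
    subsetPhiElem F N m ℓ Cl e (coordCl N m j) = 1 ↔
      (∃ k : Fin 3, e = Sum.inr (Sum.inl (Cl j k))) ∨
        ∃ k : Fin (ℓ - 1), e = Sum.inr (Sum.inr (j, k)) := by
  rcases e with k | ⟨⟨i, b⟩ | ⟨j', k⟩⟩
  · have : ¬ ∃ i : Fin N, coordCl N m j = coordVar N m i := by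
      rintro ⟨i, hi⟩; exact cl_ne_var i j hi
    simp [subsetPhiElem, cl_ne_coord0, this]
  · have h1 : (∃ j' : Fin m, coordCl N m j = coordCl N m j' ∧ ∃ k : Fin 3, Cl j' k = (i, b)) ↔
        ∃ k : Fin 3, Cl j k = (i, b) := by
      constructor
      · rintro ⟨j', hj', k, hk⟩
        exact ⟨k, by rw [cl_inj hj']; exact hk⟩
      · intro h; exact ⟨j, rfl, h⟩
    simp only [subsetPhiElem, if_neg (cl_ne_var i j), h1]
    constructor
    · intro h
      split_ifs at h with h2
      · obtain ⟨k, hk⟩ := h2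
        exact Or.inl ⟨k, by rw [hk]⟩
      · exact absurd h (by simp)
    · rintro (⟨k, hk⟩ | ⟨k, hk⟩)
      · rw [if_pos ⟨k, by injection hk with h; injection h with h2; rw [h2]⟩]
      · exact absurd hk (by simp)
  · by_cases hjj : j' = j
    · subst hjj; simp [subsetPhiElem]
    · have : coordCl N m j ≠ coordCl N m j' := fun h => hjj (cl_inj h).symm
      simp [subsetPhiElem, this, hjj, Ne.symm hjj]

private lemma phi_eq_choose (S : Finset (Fin ℓ ⊕ ((Fin N × Bool) ⊕ (Fin m × Fin (ℓ - 1)))))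
    (c : Fin (1 + N + m)) :
    ∑ T ∈ S.powersetCard ℓ, ∏ e ∈ T, subsetPhiElem F N m ℓ Cl e c
      = (((S.filter fun e => subsetPhiElem F N m ℓ Cl e c = 1).card.choose ℓ : ℕ) : F) := by
  classical
  set S₁ := S.filter fun e => subsetPhiElem F N m ℓ Cl e c = 1 with hS₁
  have hprod : ∀ T ∈ S.powersetCard ℓ, ∏ e ∈ T, subsetPhiElem F N m ℓ Cl e c
      = if T ⊆ S₁ then (1 : F) else 0 := by
    intro T hT
    rw [mem_powersetCard] at hT
    split_ifs with h
    · exact Finset.prod_eq_one fun e he => (mem_filter.mp (h he)).2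
    · obtain ⟨e, heT, heS₁⟩ := not_subset.mp h
      refine Finset.prod_eq_zero heT ?_
      rcases elem01 (F := F) (ℓ := ℓ) Cl e c with h0 | h1
      · exact h0
      · exact absurd (mem_filter.mpr ⟨hT.1 heT, h1⟩) heS₁
  rw [Finset.sum_congr rfl hprod, Finset.sum_boole]
  have hset : (S.powersetCard ℓ).filter (fun T => T ⊆ S₁) = S₁.powersetCard ℓ := by
    ext T
    simp only [mem_filter, mem_powersetCard]
    exact ⟨fun ⟨⟨_, hc⟩, h2⟩ => ⟨h2, hc⟩,
      fun ⟨h1, h2⟩ => ⟨⟨h1.trans (filter_subset _ _), h2⟩, h1⟩⟩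
  rw [hset, card_powersetCard]

private lemma cast_l_ne_zero (hℓ3 : 3 ≤ ℓ)
    (hchar : ringChar F = 0 ∨ ℓ + 2 ≤ ringChar F) : (ℓ : F) ≠ 0 := by
  intro h
  rw [ringChar.spec F ℓ] at h
  rcases hchar with h0 | hp
  · rw [h0] at h
    have := Nat.eq_zero_of_zero_dvd h
    omega
  · have := Nat.le_of_dvd (by omega) h
    omega

private lemma ge_of_choose_eq_one {n : ℕ} (hn : ((n.choose ℓ : ℕ) : F) = 1) : ℓ ≤ n := by
  by_contra hlt
  rw [Nat.choose_eq_zero_of_lt (by omega)] at hn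
  simpa using hn

private lemma ne_succ_of_choose_eq_one (hℓ3 : 3 ≤ ℓ)
    (hchar : ringChar F = 0 ∨ ℓ + 2 ≤ ringChar F)
    {n : ℕ} (hn : ((n.choose ℓ : ℕ) : F) = 1) : n ≠ ℓ + 1 := by
  rintro rfl
  rw [Nat.choose_succ_self_right] at hn
  push_cast at hn
  exact cast_l_ne_zero hℓ3 hchar (by simpa using hn)

private lemma card_filter_ne_zero (hℓ3 : 3 ≤ ℓ) :
    ((univ : Finset (Fin ℓ)).filter fun k => k.val ≠ 0).card = ℓ - 1 := by
  have h : (univ : Finset (Fin ℓ)).filter (fun k => k.val ≠ 0)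
      = univ.erase ⟨0, by omega⟩ := by
    ext k
    simp [Fin.ext_iff]
  rw [h, card_erase_of_mem (mem_univ _), card_univ, Fintype.card_fin]

end Aux

private def Pfun {N m ℓ : ℕ} (A : Fin N → Bool) (t : Fin m → Finset (Fin (ℓ - 1))) :
    (Fin ℓ ⊕ ((Fin N × Bool) ⊕ (Fin m × Fin (ℓ - 1)))) → Prop
  | Sum.inl _ => True
  | Sum.inr (Sum.inl (i, b)) => A i = b
  | Sum.inr (Sum.inr (j, k)) => k ∈ t j

/-- NP-completeness reduction for `R`-Subset-`φ_ℓ` (`ℓ ≥ 3`): a 3-CNF formula with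
pairwise-distinct variables in each clause is satisfiable iff there is a subset `S`
of the constructed elements whose `ℓ`-th elementary symmetric polynomial equals the
all-ones vector, provided `char F = 0` or `char F ≥ ℓ + 2`. -/
theorem subsetPhi_ell_reduction (N m ℓ : ℕ) (hℓ : 3 ≤ ℓ)
    (F : Type*) [Field F]
    (hchar : ringChar F = 0 ∨ ℓ + 2 ≤ ringChar F)
    (Cl : Fin m → Fin 3 → (Fin N × Bool))
    (hdist : ∀ j : Fin m, ∀ k₁ k₂ : Fin 3, k₁ ≠ k₂ → (Cl j k₁).1 ≠ (Cl j k₂).1) :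
    (∃ A : Fin N → Bool, ∀ j : Fin m, ∃ k : Fin 3, A (Cl j k).1 = (Cl j k).2) ↔
      (∃ S : Finset (Fin ℓ ⊕ ((Fin N × Bool) ⊕ (Fin m × Fin (ℓ - 1)))),
        ∀ c : Fin (1 + N + m),
          ∑ T ∈ S.powersetCard ℓ, ∏ e ∈ T, subsetPhiElem F N m ℓ Cl e c = 1) := by
  classical
  constructor
  · rintro ⟨A, hA⟩
    set L : Fin m → ℕ :=
      fun j => (univ.filter fun k : Fin 3 => A (Cl j k).1 = (Cl j k).2).card with hLdef
    have hL1 : ∀ j, 1 ≤ L j := fun j => by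
      obtain ⟨k, hk⟩ := hA j
      exact card_pos.mpr ⟨k, mem_filter.mpr ⟨mem_univ _, hk⟩⟩
    have hL3 : ∀ j, L j ≤ 3 := fun j => by
      simpa using (card_filter_le (univ : Finset (Fin 3)) _)
    have hex : ∀ j : Fin m, ∃ t : Finset (Fin (ℓ - 1)), t.card = ℓ - L j := by
      intro j
      obtain ⟨t, -, ht⟩ := exists_subset_card_eq (s := (univ : Finset (Fin (ℓ - 1))))
        (n := ℓ - L j) (by rw [card_univ, Fintype.card_fin]; have := hL1 j; omega)
      exact ⟨t, ht⟩
    choose t ht using hex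
    refine ⟨univ.filter (Pfun A t), fun c => ?_⟩
    rw [phi_eq_choose]
    rcases coord_cases c with rfl | ⟨i, rfl⟩ | ⟨j, rfl⟩
    · have h0 : ((univ.filter (Pfun A t)).filter
          fun e => subsetPhiElem F N m ℓ Cl e (coord0 N m) = 1)
          = univ.image (Sum.inl : Fin ℓ → Fin ℓ ⊕ ((Fin N × Bool) ⊕ (Fin m × Fin (ℓ - 1)))) := by
        ext e
        rcases e with k | ⟨⟨i, b⟩ | ⟨j, k⟩⟩ <;> simp [one_coord0, Pfun]
      rw [h0, card_image_of_injective _ Sum.inl_injective, card_univ, Fintype.card_fin,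
        Nat.choose_self, Nat.cast_one]
    · have hv : ((univ.filter (Pfun A t)).filter
          fun e => subsetPhiElem F N m ℓ Cl e (coordVar N m i) = 1)
          = ((univ.filter fun k : Fin ℓ => k.val ≠ 0).image Sum.inl)
            ∪ {Sum.inr (Sum.inl (i, A i))} := by
        ext e
        rcases e with k | ⟨⟨i', b⟩ | ⟨j, k⟩⟩
        · simp [one_coordVar, Pfun]
        · simp only [mem_filter, mem_univ, true_and, one_coordVar, mem_union, mem_image,
            mem_singleton, Pfun]
          constructor
          · rintro ⟨hab, ⟨k, -, hk⟩ | ⟨b', hb'⟩⟩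
            · exact absurd hk (by simp)
            · simp only [Sum.inr.injEq, Sum.inl.injEq, Prod.mk.injEq] at hb'
              obtain ⟨rfl, rfl⟩ := hb'
              exact Or.inr (by rw [hab])
          · rintro (⟨k, -, hk⟩ | hb)
            · exact absurd hk (by simp)
            · simp only [Sum.inr.injEq, Sum.inl.injEq, Prod.mk.injEq] at hb
              obtain ⟨rfl, rfl⟩ := hb
              exact ⟨rfl, Or.inr ⟨_, rfl⟩⟩
        · simp [one_coordVar, Pfun]
      have hdisj : Disjoint ((univ.filter fun k : Fin ℓ => k.val ≠ 0).image
            (Sum.inl : Fin ℓ → Fin ℓ ⊕ ((Fin N × Bool) ⊕ (Fin m × Fin (ℓ - 1)))))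
          ({Sum.inr (Sum.inl (i, A i))} : Finset (Fin ℓ ⊕ ((Fin N × Bool) ⊕ (Fin m × Fin (ℓ - 1))))) := by
        refine disjoint_left.mpr ?_
        rintro e he hs
        obtain ⟨k, -, rfl⟩ := mem_image.mp he
        simp at hs
      rw [hv, card_union_of_disjoint hdisj, card_image_of_injective _ Sum.inl_injective,
        card_filter_ne_zero hℓ, card_singleton]
      have h1 : ℓ - 1 + 1 = ℓ := by omega
      rw [h1, Nat.choose_self, Nat.cast_one]
    · have hinj3 : Function.Injective
          fun k : Fin 3 => (Sum.inr (Sum.inl (Cl j k)) : Fin ℓ ⊕ ((Fin N × Bool) ⊕ (Fin m × Fin (ℓ - 1)))) := by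
        intro k₁ k₂ h
        simp only [Sum.inr.injEq, Sum.inl.injEq] at h
        by_contra hne
        exact hdist j k₁ k₂ hne (by rw [h])
      have hc : ((univ.filter (Pfun A t)).filter
          fun e => subsetPhiElem F N m ℓ Cl e (coordCl N m j) = 1)
          = ((univ.filter fun k : Fin 3 => A (Cl j k).1 = (Cl j k).2).image
              fun k => Sum.inr (Sum.inl (Cl j k)))
            ∪ ((t j).image fun k => Sum.inr (Sum.inr (j, k))) := by
        ext e
        rcases e with k | ⟨⟨i, b⟩ | ⟨j', k⟩⟩
        · simp [one_coordCl, Pfun]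
        · simp only [mem_filter, mem_univ, true_and, one_coordCl, mem_union, mem_image,
            Pfun]
          constructor
          · rintro ⟨hab, ⟨k, hk⟩ | ⟨k, hk⟩⟩
            · refine Or.inl ⟨k, ?_, hk.symm⟩
              simp only [Sum.inr.injEq, Sum.inl.injEq] at hk
              rw [← hk]
              exact hab
            · exact absurd hk (by simp)
          · rintro (⟨k, hk, hke⟩ | ⟨k, -, hke⟩)
            · refine ⟨?_, Or.inl ⟨k, hke.symm⟩⟩
              simp only [Sum.inr.injEq, Sum.inl.injEq] at hke
              rw [hke] at hk
              exact hk
            · exact absurd hke (by simp)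
        · simp only [mem_filter, mem_univ, true_and, one_coordCl, mem_union, mem_image,
            Pfun]
          constructor
          · rintro ⟨hkt, ⟨k', hk'⟩ | ⟨k', hk'⟩⟩
            · exact absurd hk' (by simp)
            · simp only [Sum.inr.injEq, Prod.mk.injEq] at hk'
              obtain ⟨rfl, rfl⟩ := hk'
              exact Or.inr ⟨k, hkt, rfl⟩
          · rintro (⟨k', -, hk'⟩ | ⟨k', hk', hke⟩)
            · exact absurd hk' (by simp)
            · simp only [Sum.inr.injEq, Prod.mk.injEq] at hke
              obtain ⟨rfl, rfl⟩ := hke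
              exact ⟨hk', Or.inr ⟨k', rfl⟩⟩
      have hdisj : Disjoint
          ((univ.filter fun k : Fin 3 => A (Cl j k).1 = (Cl j k).2).image
            fun k => (Sum.inr (Sum.inl (Cl j k)) : Fin ℓ ⊕ ((Fin N × Bool) ⊕ (Fin m × Fin (ℓ - 1)))))
          ((t j).image fun k => Sum.inr (Sum.inr (j, k))) := by
        refine disjoint_left.mpr ?_
        rintro e he hs
        obtain ⟨k, -, rfl⟩ := mem_image.mp he
        obtain ⟨k', -, hk'⟩ := mem_image.mp hs
        exact absurd hk' (by simp)
      rw [hc, card_union_of_disjoint hdisj, card_image_of_injective _ hinj3,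
        card_image_of_injective _ (fun k₁ k₂ h => by
          simpa using h : Function.Injective fun k : Fin (ℓ - 1) =>
            (Sum.inr (Sum.inr (j, k)) : Fin ℓ ⊕ ((Fin N × Bool) ⊕ (Fin m × Fin (ℓ - 1))))), ht j]
      have hLj : ((univ.filter fun k : Fin 3 => A (Cl j k).1 = (Cl j k).2).card) = L j := rfl
      have h1 : L j + (ℓ - L j) = ℓ := by have := hL1 j; have := hL3 j; omega
      rw [hLj, h1, Nat.choose_self, Nat.cast_one]
  · rintro ⟨S, hS⟩
    have key : ∀ c, (((S.filter fun e => subsetPhiElem F N m ℓ Cl e c = 1).card.choose ℓ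
        : ℕ) : F) = 1 := fun c => by rw [← phi_eq_choose]; exact hS c
    have hα : ∀ k : Fin ℓ, (Sum.inl k : Fin ℓ ⊕ ((Fin N × Bool) ⊕ (Fin m × Fin (ℓ - 1)))) ∈ S := by
      have hsub : (S.filter fun e => subsetPhiElem F N m ℓ Cl e (coord0 N m) = 1)
          ⊆ univ.image Sum.inl := by
        intro e he
        obtain ⟨k, rfl⟩ := (one_coord0 Cl e).mp (mem_filter.mp he).2
        exact mem_image.mpr ⟨k, mem_univ _, rfl⟩
      have hge := ge_of_choose_eq_one (key (coord0 N m))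
      have hle : (univ.image (Sum.inl : Fin ℓ → Fin ℓ ⊕ ((Fin N × Bool) ⊕ (Fin m × Fin (ℓ - 1))))).card
          ≤ (S.filter fun e => subsetPhiElem F N m ℓ Cl e (coord0 N m) = 1).card := by
        rw [card_image_of_injective _ Sum.inl_injective, card_univ, Fintype.card_fin]
        exact hge
      have heq := eq_of_subset_of_card_le hsub hle
      intro k
      have hmem : (Sum.inl k : Fin ℓ ⊕ ((Fin N × Bool) ⊕ (Fin m × Fin (ℓ - 1)))) ∈
          S.filter fun e => subsetPhiElem F N m ℓ Cl e (coord0 N m) = 1 := by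
        rw [heq]; exact mem_image.mpr ⟨k, mem_univ _, rfl⟩
      exact (mem_filter.mp hmem).1
    have hlit : ∀ i : Fin N, ∃ b : Bool, ∀ b' : Bool,
        ((Sum.inr (Sum.inl (i, b')) : Fin ℓ ⊕ ((Fin N × Bool) ⊕ (Fin m × Fin (ℓ - 1)))) ∈ S ↔ b' = b) := by
      intro i
      set B2 := S.filter fun e => ∃ b : Bool, e = Sum.inr (Sum.inl (i, b)) with hB2
      have hunion : (S.filter fun e => subsetPhiElem F N m ℓ Cl e (coordVar N m i) = 1)
          = ((univ.filter fun k : Fin ℓ => k.val ≠ 0).image Sum.inl) ∪ B2 := by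
        ext e
        constructor
        · intro he
          obtain ⟨heS, hcv⟩ := mem_filter.mp he
          rcases (one_coordVar Cl i e).mp hcv with ⟨k, hk0, rfl⟩ | ⟨b, rfl⟩
          · exact mem_union_left _ (mem_image.mpr ⟨k, mem_filter.mpr ⟨mem_univ _, hk0⟩, rfl⟩)
          · exact mem_union_right _ (mem_filter.mpr ⟨heS, b, rfl⟩)
        · intro he
          rcases mem_union.mp he with h1 | h2
          · obtain ⟨k, hk, rfl⟩ := mem_image.mp h1
            exact mem_filter.mpr ⟨hα k,
              (one_coordVar Cl i _).mpr (Or.inl ⟨k, (mem_filter.mp hk).2, rfl⟩)⟩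
          · obtain ⟨heS, b, rfl⟩ := mem_filter.mp h2
            exact mem_filter.mpr ⟨heS, (one_coordVar Cl i _).mpr (Or.inr ⟨b, rfl⟩)⟩
      have hdisj : Disjoint ((univ.filter fun k : Fin ℓ => k.val ≠ 0).image
          (Sum.inl : Fin ℓ → Fin ℓ ⊕ ((Fin N × Bool) ⊕ (Fin m × Fin (ℓ - 1))))) B2 := by
        refine disjoint_left.mpr ?_
        rintro e he hb
        obtain ⟨k, -, rfl⟩ := mem_image.mp he
        obtain ⟨b, h⟩ := (mem_filter.mp hb).2
        exact absurd h (by simp)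
      have hB2le : B2.card ≤ 2 := by
        have hsub : B2 ⊆ {Sum.inr (Sum.inl (i, true)), Sum.inr (Sum.inl (i, false))} := by
          intro e he
          obtain ⟨b, rfl⟩ := (mem_filter.mp he).2
          cases b <;> simp
        exact (card_le_card hsub).trans ((card_insert_le _ _).trans (by simp))
      have hcard := key (coordVar N m i)
      have hn : (S.filter fun e => subsetPhiElem F N m ℓ Cl e (coordVar N m i) = 1).card
          = (ℓ - 1) + B2.card := by
        rw [hunion, card_union_of_disjoint hdisj,
          card_image_of_injective _ Sum.inl_injective, card_filter_ne_zero hℓ]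
      have hge := ge_of_choose_eq_one hcard
      have hne := ne_succ_of_choose_eq_one hℓ hchar hcard
      have hB2card : B2.card = 1 := by omega
      obtain ⟨x, hx⟩ := card_eq_one.mp hB2card
      have hxmem : x ∈ B2 := by rw [hx]; exact mem_singleton_self x
      obtain ⟨hxS, b, rfl⟩ := mem_filter.mp hxmem
      refine ⟨b, fun b' => ⟨fun hmem => ?_, fun h => by subst h; exact hxS⟩⟩
      have hmem2 : (Sum.inr (Sum.inl (i, b')) : Fin ℓ ⊕ ((Fin N × Bool) ⊕ (Fin m × Fin (ℓ - 1)))) ∈ B2 :=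
        mem_filter.mpr ⟨hmem, b', rfl⟩
      rw [hx, mem_singleton] at hmem2
      simpa using hmem2
    choose A hA2 using hlit
    refine ⟨A, fun j => ?_⟩
    have hcard := key (coordCl N m j)
    set C1 := S.filter fun e => ∃ k : Fin 3, e = Sum.inr (Sum.inl (Cl j k)) with hC1
    set C2 := S.filter fun e => ∃ k : Fin (ℓ - 1), e = Sum.inr (Sum.inr (j, k)) with hC2
    have hunion : (S.filter fun e => subsetPhiElem F N m ℓ Cl e (coordCl N m j) = 1)
        = C1 ∪ C2 := by
      ext e
      simp only [hC1, hC2, mem_filter, mem_union, one_coordCl Cl j e]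
      tauto
    have hC2le : C2.card ≤ ℓ - 1 := by
      have hsub : C2 ⊆ univ.image fun k : Fin (ℓ - 1) => (Sum.inr (Sum.inr (j, k)) : _) := by
        intro e he
        obtain ⟨k, rfl⟩ := (mem_filter.mp he).2
        exact mem_image.mpr ⟨k, mem_univ _, rfl⟩
      calc C2.card ≤ _ := card_le_card hsub
        _ ≤ (univ : Finset (Fin (ℓ - 1))).card := card_image_le
        _ = ℓ - 1 := by rw [card_univ, Fintype.card_fin]
    have hge := ge_of_choose_eq_one hcard
    rw [hunion] at hge
    have hle := card_union_le C1 C2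
    have hC1pos : 0 < C1.card := by omega
    obtain ⟨e, he⟩ := card_pos.mp hC1pos
    obtain ⟨heS, k, rfl⟩ := mem_filter.mp he
    exact ⟨k, ((hA2 (Cl j k).1 (Cl j k).2).mp heS).symm⟩
end

section
/- Let n, ℓ : ℕ with 1 ≤ ℓ and ℓ ≤ n, and let hp be a proof that (ℓ : ℝ≥0∞) / n ≤ 1. Under the binomial distribution PMF.binomial ((ℓ : ℝ≥0∞)/n) hp n on Fin (n+1), the probability of the event {k : Fin (n+1) | (ℓ : ℝ)/2 ≤ |(k : ℝ) − (ℓ : ℝ)|} is at most ENNReal.ofReal (2 · Real.exp (−(ℓ : ℝ)/12)). -/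
/-! Exponential Markov inequality: for every real `t`, `Pr[t a ≤ t X] ≤ e^{-t a} E[e^{t X}]`, and
for `X ~ Bin(n, p)` the moment generating function is
`(p e^t + 1 - p)^n ≤ exp (n p (e^t - 1))`. With mean `n p = ℓ`, taking `t = -1` for the lower
tail `X ≤ ℓ/2` and `t = 2/5` for the upper tail `X ≥ 3ℓ/2` gives exponents
`ℓ (e^{-1} - 1/2)` and `ℓ (e^{2/5} - 8/5)`, both at most `-ℓ/12` since
`e^{-1} < 5/12` and `e^{2/5} < 3/2`. -/

open scoped NNReal ENNReal

set_option linter.deprecated false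

namespace PMF

theorem toOuterMeasure_le_ofReal_sum_mul_exp {α : Type*} [Fintype α] (μ : PMF α) (s : Set α)
    (g : α → ℝ) (hg : ∀ x ∈ s, 0 ≤ g x) :
    μ.toOuterMeasure s ≤ ENNReal.ofReal (∑ x, (μ x).toReal * Real.exp (g x)) := by
  rw [toOuterMeasure_apply, tsum_fintype, ENNReal.ofReal_sum_of_nonneg fun x _ => by positivity]
  gcongr with x
  rw [ENNReal.ofReal_mul ENNReal.toReal_nonneg, ENNReal.ofReal_toReal (μ.apply_ne_top x)]
  by_cases hx : x ∈ s
  · rw [Set.indicator_of_mem hx]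
    exact le_mul_of_one_le_right' (ENNReal.one_le_ofReal.2 (Real.one_le_exp (hg x hx)))
  · rw [Set.indicator_of_notMem hx]
    exact zero_le

variable (p : ℝ≥0) (hp : p ≤ 1) (n : ℕ)

theorem binomial_apply_toReal (k : Fin (n + 1)) :
    (binomial p hp n k).toReal = p ^ (k : ℕ) * (1 - p) ^ (n - k : ℕ) * n.choose k := by
  have hp' : (p : ℝ≥0∞) ≤ 1 := by exact_mod_cast hp
  simp [binomial_apply, ENNReal.toReal_sub_of_le hp' ENNReal.one_ne_top]

theorem sum_binomial_apply_toReal_mul_exp (t : ℝ) :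
    ∑ k : Fin (n + 1), (binomial p hp n k).toReal * Real.exp (t * k) =
      (p * Real.exp t + (1 - p)) ^ n := by
  simp_rw [binomial_apply_toReal, add_pow, ← Fin.sum_univ_eq_sum_range, mul_pow,
    ← Real.exp_nat_mul]
  refine Finset.sum_congr rfl fun k _ => ?_
  ring_nf

theorem binomial_toOuterMeasure_le_exp (t a : ℝ) :
    (binomial p hp n).toOuterMeasure {k | t * a ≤ t * k} ≤
      ENNReal.ofReal (Real.exp (n * p * (Real.exp t - 1) - t * a)) := by
  refine (toOuterMeasure_le_ofReal_sum_mul_exp _ _ (fun k : Fin (n + 1) => t * k - t * a)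
    fun k hk => sub_nonneg.2 hk).trans (ENNReal.ofReal_le_ofReal ?_)
  have hbase : 0 ≤ p * Real.exp t + (1 - p) :=
    add_nonneg (by positivity) (sub_nonneg.2 (by exact_mod_cast hp))
  calc ∑ k, (binomial p hp n k).toReal * Real.exp (t * k - t * a)
      = (p * Real.exp t + (1 - p)) ^ n * Real.exp (-(t * a)) := by
        simp_rw [sub_eq_add_neg, Real.exp_add, ← mul_assoc, ← Finset.sum_mul,
          ← sub_eq_add_neg, sum_binomial_apply_toReal_mul_exp]
    _ ≤ Real.exp (p * (Real.exp t - 1)) ^ n * Real.exp (-(t * a)) := by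
        gcongr
        linarith [Real.add_one_le_exp (p * (Real.exp t - 1))]
    _ = Real.exp (n * p * (Real.exp t - 1) - t * a) := by
        rw [← Real.exp_nat_mul, ← Real.exp_add]
        ring_nf

end PMF

theorem Real.exp_two_fifths_lt : Real.exp (2 / 5) < 3 / 2 := by
  refine (Real.exp_bound' (by norm_num) (by norm_num) (n := 3) (by norm_num)).trans_lt ?_
  norm_num [Finset.sum_range_succ, Nat.factorial]

/-- Multiplicative Chernoff bound with deviation `δ = 1/2` for the binomial
distribution with `n` trials and success probability `ℓ/n` (mean `ℓ`): the number of
successes deviates from `ℓ` by at least `ℓ/2` with probability at most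
`2·exp(−ℓ/12)`. -/
theorem binomial_chernoff_half (n ℓ : ℕ) (h1 : 1 ≤ ℓ) (h2 : ℓ ≤ n)
    (hp : (ℓ : ℝ≥0∞) / n ≤ 1) :
    (PMF.binomial ((ℓ : ℝ≥0∞) / n).toNNReal
        (by simpa using ENNReal.toNNReal_mono ENNReal.one_ne_top hp) n).toOuterMeasure
        {k : Fin (n + 1) | (ℓ : ℝ) / 2 ≤ |(k.val : ℝ) - (ℓ : ℝ)|} ≤
      ENNReal.ofReal (2 * Real.exp (-(ℓ : ℝ) / 12)) := by
  have hmean : (n : ℝ) * ((ℓ : ℝ≥0∞) / n).toNNReal = ℓ := by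
    have hn : (n : ℝ) ≠ 0 := by norm_cast; omega
    simp [field]
  have hsplit : {k : Fin (n + 1) | (ℓ : ℝ) / 2 ≤ |(k.val : ℝ) - (ℓ : ℝ)|} ⊆
      {k | -1 * (ℓ / 2 : ℝ) ≤ -1 * k} ∪ {k | 2 / 5 * (3 * ℓ / 2 : ℝ) ≤ 2 / 5 * k} := by
    intro k (hk : (ℓ : ℝ) / 2 ≤ |(k.val : ℝ) - ℓ|)
    rcases le_abs'.1 hk with hk | hk
    · left; simp only [Set.mem_ofPred_eq]; linarith
    · right; simp only [Set.mem_ofPred_eq]; linarith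
  have hℓ : (0 : ℝ) ≤ ℓ := ℓ.cast_nonneg
  calc _ ≤ _ := MeasureTheory.measure_mono hsplit
    _ ≤ _ := MeasureTheory.measure_union_le _ _
    _ ≤ ENNReal.ofReal (Real.exp (-ℓ / 12)) + ENNReal.ofReal (Real.exp (-ℓ / 12)) := by
        gcongr ?_ + ?_
        · refine (PMF.binomial_toOuterMeasure_le_exp _ _ n _ _).trans
            (ENNReal.ofReal_le_ofReal (Real.exp_le_exp.2 ?_))
          rw [hmean]
          nlinarith [Real.exp_neg_one_lt_d9]
        · refine (PMF.binomial_toOuterMeasure_le_exp _ _ n _ _).trans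
            (ENNReal.ofReal_le_ofReal (Real.exp_le_exp.2 ?_))
          rw [hmean]
          nlinarith [Real.exp_two_fifths_lt]
    _ = ENNReal.ofReal (2 * Real.exp (-ℓ / 12)) := by
        rw [← ENNReal.ofReal_add (by positivity) (by positivity), two_mul]
end

section
/- Let ε : ℝ with 0 < ε < 1/3, let ℓ', m : ℕ, and let p : ℝ≥0∞ with hp : p ≤ 1 be such that (m : ℝ) · p.toReal = (1/3 + ε) · ℓ'. Under the binomial distribution PMF.binomial p hp m on Fin (m+1), the probability of the event {k : Fin (m+1) | (k : ℝ) ≤ (ℓ' : ℝ)/3} is at most ENNReal.ofReal (Real.exp (−(3·ε^2·ℓ') / (2·(1 + 3·ε)))). -/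
open scoped ENNReal NNReal

/-! Chernoff's exponential-moment method. For `t ≥ 0` the weight `e^{t(a-k)}` dominates the
indicator of `{k ≤ a}`, and by the binomial theorem its expectation is
`e^{ta} (p e^{-t} + 1 - p)^n ≤ exp (ta + np(e^{-t} - 1))`. Choosing `e^{-t} = 1 - δ` and
`a = (1 - δ)μ` with `μ = np`, the exponent is `-μ(δ + (1 - δ) log (1 - δ))`, which is at most
`-δ²μ/2` since `log y ≥ sinh (log y) = (y - y⁻¹)/2` for `y ≤ 1`. For `δ = 3ε/(1 + 3ε)` and
`μ = (1/3 + ε)ℓ'` this gives `(1 - δ)μ = ℓ'/3` and `δ²μ/2 = 3ε²ℓ'/(2(1 + 3ε))`. -/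

set_option linter.deprecated false

namespace Real

lemma sub_inv_div_two_le_log {y : ℝ} (hy0 : 0 < y) (hy1 : y ≤ 1) : (y - y⁻¹) / 2 ≤ log y :=
  sinh_log hy0 ▸ sinh_le_self_iff.2 (log_nonpos hy0.le hy1)

end Real

namespace ENNReal

lemma ofReal_mul_add_one_sub_le_ofReal_exp {z : ℝ} (hz : 0 ≤ z) {p : ℝ≥0} (hp : p ≤ 1) :
    ENNReal.ofReal z * p + (1 - p) ≤ ENNReal.ofReal (Real.exp (p * (z - 1))) := by
  have hreal : ENNReal.ofReal z * p + (1 - p) = ENNReal.ofReal (z * p + (1 - p)) := by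
    rw [ENNReal.ofReal_add (by positivity) (by simpa using hp), ENNReal.ofReal_mul hz,
      ← NNReal.coe_one, ← NNReal.coe_sub hp, ENNReal.ofReal_coe_nnreal, ENNReal.ofReal_coe_nnreal,
      ENNReal.coe_sub, ENNReal.coe_one]
  rw [hreal]
  exact ENNReal.ofReal_le_ofReal (by linarith [Real.add_one_le_exp (p * (z - 1))])

end ENNReal

namespace PMF

lemma toOuterMeasure_le_tsum_mul {α : Type*} (μ : PMF α) {s : Set α} {f : α → ℝ≥0∞}
    (hf : ∀ a ∈ s, 1 ≤ f a) : μ.toOuterMeasure s ≤ ∑' a, f a * μ a := by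
  rw [toOuterMeasure_apply]
  refine ENNReal.tsum_le_tsum fun a => ?_
  by_cases ha : a ∈ s
  · simpa [Set.indicator_of_mem ha] using mul_le_mul_left (hf a ha) (μ a)
  · simp [Set.indicator_of_notMem ha]

lemma sum_pow_mul_binomial (p : ℝ≥0) (h : p ≤ 1) (n : ℕ) (z : ℝ≥0∞) :
    ∑ k : Fin (n + 1), z ^ (k : ℕ) * binomial p h n k = (z * p + (1 - p)) ^ n := by
  rw [add_pow, ← Fin.sum_univ_eq_sum_range]
  refine Finset.sum_congr rfl fun k _ => ?_
  rw [binomial_apply, Fin.val_last, mul_pow]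
  ring

lemma toOuterMeasure_binomial_le_le_exp (p : ℝ≥0) (h : p ≤ 1) (n : ℕ) (a : ℝ) {t : ℝ}
    (ht : 0 ≤ t) :
    (binomial p h n).toOuterMeasure {k | ((k : ℕ) : ℝ) ≤ a} ≤
      ENNReal.ofReal (Real.exp (t * a + n * p * (Real.exp (-t) - 1))) := by
  set c := ENNReal.ofReal (Real.exp (t * a))
  set z := ENNReal.ofReal (Real.exp (-t))
  have hweight : ∀ k ∈ {k : Fin (n + 1) | ((k : ℕ) : ℝ) ≤ a}, 1 ≤ c * z ^ (k : ℕ) := by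
    intro k hk
    rw [← ENNReal.ofReal_pow (Real.exp_nonneg _), ← ENNReal.ofReal_mul (Real.exp_nonneg _),
      ← Real.exp_nat_mul, ← Real.exp_add]
    exact ENNReal.one_le_ofReal.2 (Real.one_le_exp (by nlinarith [hk.out]))
  calc _ ≤ ∑' k : Fin (n + 1), c * z ^ (k : ℕ) * binomial p h n k :=
        toOuterMeasure_le_tsum_mul _ hweight
    _ = c * (z * p + (1 - p)) ^ n := by
      simp_rw [tsum_fintype, mul_assoc, ← Finset.mul_sum, sum_pow_mul_binomial]
    _ ≤ c * ENNReal.ofReal (Real.exp (p * (Real.exp (-t) - 1))) ^ n := by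
      gcongr
      exact ENNReal.ofReal_mul_add_one_sub_le_ofReal_exp (Real.exp_nonneg _) h
    _ = _ := by
      rw [← ENNReal.ofReal_pow (Real.exp_nonneg _), ← ENNReal.ofReal_mul (Real.exp_nonneg _),
        ← Real.exp_nat_mul, ← Real.exp_add, mul_assoc]

lemma toOuterMeasure_binomial_le_le_exp_neg_sq (p : ℝ≥0) (h : p ≤ 1) (n : ℕ) {δ : ℝ}
    (hδ0 : 0 ≤ δ) (hδ1 : δ < 1) :
    (binomial p h n).toOuterMeasure {k | ((k : ℕ) : ℝ) ≤ (1 - δ) * (n * p)} ≤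
      ENNReal.ofReal (Real.exp (-(δ ^ 2 * (n * p)) / 2)) := by
  have hy0 : 0 < 1 - δ := by linarith
  refine (toOuterMeasure_binomial_le_le_exp p h n _ (t := -Real.log (1 - δ))
    (neg_nonneg.2 (Real.log_nonpos hy0.le (by linarith)))).trans ?_
  rw [neg_neg, Real.exp_log hy0]
  refine ENNReal.ofReal_le_ofReal (Real.exp_le_exp.2 ?_)
  have hlog := Real.sub_inv_div_two_le_log hy0 (by linarith)
  have hμ : (0 : ℝ) ≤ n * p := by positivity
  have hsq : (1 - δ) * ((1 - δ) - (1 - δ)⁻¹) = (1 - δ) ^ 2 - 1 := by field_simp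
  nlinarith [mul_le_mul_of_nonneg_left hlog (mul_nonneg hy0.le hμ)]

end PMF

/-- Lower-tail Chernoff bound used in the robustness proof of the OWF-based SRDS:
for a binomial with `m` trials and mean `(1/3 + ε)·ℓ'`, the number of successes is at
most `ℓ'/3` with probability at most `exp(−3ε²ℓ'/(2(1+3ε)))`. -/
theorem binomial_chernoff_lower_tail (ε : ℝ) (hε0 : 0 < ε)
    (ℓ' m : ℕ) (p : ℝ≥0∞) (hp : p ≤ 1)
    (hmean : (m : ℝ) * p.toReal = (1 / 3 + ε) * (ℓ' : ℝ)) :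
    (PMF.binomial p.toNNReal (by simpa using ENNReal.toNNReal_mono ENNReal.one_ne_top hp) m).toOuterMeasure
        {k : Fin (m + 1) | (k.val : ℝ) ≤ (ℓ' : ℝ) / 3} ≤
      ENNReal.ofReal (Real.exp (-(3 * ε ^ 2 * (ℓ' : ℝ)) / (2 * (1 + 3 * ε)))) := by
  have hε : 0 < 1 + 3 * ε := by linarith
  set δ := 3 * ε / (1 + 3 * ε) with hδ
  have hδ0 : 0 ≤ δ := by positivity
  have hδ1 : δ < 1 := (div_lt_one hε).2 (by linarith)
  have hμ : (m : ℝ) * (p.toNNReal : ℝ) = (1 / 3 + ε) * ℓ' := hmean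
  have hthreshold : (1 - δ) * (m * p.toNNReal) = (ℓ' : ℝ) / 3 := by
    rw [hμ, hδ]; field_simp; ring
  have hexponent : -(δ ^ 2 * (m * p.toNNReal)) / 2 = -(3 * ε ^ 2 * ℓ') / (2 * (1 + 3 * ε)) := by
    rw [hμ, hδ]; field_simp
  simpa only [hthreshold, hexponent] using
    PMF.toOuterMeasure_binomial_le_le_exp_neg_sq p.toNNReal
      (by simpa using ENNReal.toNNReal_mono ENNReal.one_ne_top hp) m hδ0 hδ1
end

section
/- Let ε'' : ℝ with 2/9 < ε'' < 1/3, let ℓ', m : ℕ, and let p : ℝ≥0∞ with hp : p ≤ 1 be such that (m : ℝ) · p.toReal = (1 − 3·ε'') · ℓ' (equivalently, 3·(1/3 − ε'')·ℓ'). Under the binomial distribution PMF.binomial p hp m on Fin (m+1), the probability of the event {k : Fin (m+1) | (ℓ' : ℝ)/3 ≤ (k : ℝ)} is at most ENNReal.ofReal (Real.exp (−((9·ε'' − 2)^2 · ℓ') / (3·(4 − 9·ε'')))). -/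
open scoped ENNReal NNReal

/-! Exponential Markov with `t = log (1 + δ)`, the binomial moment generating function
`(1 + p (eᵗ - 1))ⁿ ≤ exp (n p (eᵗ - 1))` and `log (1 + δ) ≥ 2δ / (2 + δ)` give the Chernoff bound
`Pr[X ≥ (1 + δ) μ] ≤ exp (-δ² μ / (2 + δ))`. For `δ = (9ε'' - 2) / (3 - 9ε'')` the threshold
`(1 + δ) μ` is `ℓ' / 3` and the exponent is the stated one. -/

namespace PMF

lemma toOuterMeasure_ge_le_exp_mul_tsum {α : Type*} (μ : PMF α) (f : α → ℝ) {t : ℝ}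
    (ht : 0 ≤ t) (a : ℝ) :
    μ.toOuterMeasure {x | a ≤ f x} ≤
      ENNReal.ofReal (Real.exp (-(t * a))) * ∑' x, μ x * ENNReal.ofReal (Real.exp (t * f x)) := by
  rw [toOuterMeasure_apply, ← ENNReal.tsum_mul_left]
  refine ENNReal.tsum_le_tsum fun x => ?_
  by_cases hx : a ≤ f x
  · rw [Set.indicator_of_mem (show x ∈ {x | a ≤ f x} from hx), mul_left_comm,
      ← ENNReal.ofReal_mul (Real.exp_nonneg _), ← Real.exp_add]
    exact le_mul_of_one_le_right' (ENNReal.one_le_ofReal.2 (Real.one_le_exp (by nlinarith)))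
  · rw [Set.indicator_of_notMem (show x ∉ {x | a ≤ f x} from hx)]
    exact zero_le'

lemma binomial_sum_mul_pow (p : ℝ≥0) (h : p ≤ 1) (n : ℕ) (c : ℝ≥0∞) :
    ∑ k : Fin (n + 1), binomial p h n k * c ^ (k : ℕ) = (p * c + (1 - p)) ^ n := by
  rw [add_pow, ← Fin.sum_univ_eq_sum_range]
  refine Finset.sum_congr rfl fun k _ => ?_
  rw [binomial_apply, Fin.val_last, mul_pow]
  ring

lemma binomial_tsum_mul_exp_le (p : ℝ≥0) (h : p ≤ 1) (n : ℕ) (t : ℝ) :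
    ∑' k, binomial p h n k * ENNReal.ofReal (Real.exp (t * (k : ℕ))) ≤
      ENNReal.ofReal (Real.exp (n * p * (Real.exp t - 1))) := by
  have hbase : (p : ℝ≥0∞) * ENNReal.ofReal (Real.exp t) + (1 - p) ≤
      ENNReal.ofReal (Real.exp (p * (Real.exp t - 1))) := by
    rw [← ENNReal.ofReal_coe_nnreal, ← ENNReal.ofReal_mul p.coe_nonneg, ← ENNReal.ofReal_one,
      ← ENNReal.ofReal_sub _ p.coe_nonneg, ← ENNReal.ofReal_add (by positivity)
        (sub_nonneg.2 (mod_cast h))]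
    exact ENNReal.ofReal_le_ofReal (by linarith [Real.add_one_le_exp (p * (Real.exp t - 1))])
  simp_rw [tsum_fintype, mul_comm t, Real.exp_nat_mul, ENNReal.ofReal_pow (Real.exp_nonneg t),
    binomial_sum_mul_pow]
  calc (p * ENNReal.ofReal (Real.exp t) + (1 - p)) ^ n
      ≤ ENNReal.ofReal (Real.exp (p * (Real.exp t - 1))) ^ n := by gcongr
    _ = ENNReal.ofReal (Real.exp (n * p * (Real.exp t - 1))) := by
      rw [← ENNReal.ofReal_pow (Real.exp_nonneg _), ← Real.exp_nat_mul, mul_assoc]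

theorem binomial_toOuterMeasure_ge_le_exp (p : ℝ≥0) (h : p ≤ 1) (n : ℕ) {δ : ℝ}
    (hδ : 0 ≤ δ) :
    (binomial p h n).toOuterMeasure {k | (1 + δ) * (n * p) ≤ (k : ℕ)} ≤
      ENNReal.ofReal (Real.exp (-(δ ^ 2 * (n * p)) / (2 + δ))) := by
  set μ : ℝ := n * p
  set t := Real.log (1 + δ)
  have hmgf := binomial_tsum_mul_exp_le p h n t
  rw [Real.exp_log (by linarith), add_sub_cancel_left] at hmgf
  calc _ ≤ ENNReal.ofReal (Real.exp (-(t * ((1 + δ) * μ)))) *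
        ∑' k, binomial p h n k * ENNReal.ofReal (Real.exp (t * (k : ℕ))) :=
        toOuterMeasure_ge_le_exp_mul_tsum _ (fun k : Fin (n + 1) => ((k : ℕ) : ℝ))
          (Real.log_nonneg (le_add_of_nonneg_right hδ)) _
    _ ≤ ENNReal.ofReal (Real.exp (-(t * ((1 + δ) * μ)))) * ENNReal.ofReal (Real.exp (μ * δ)) := by
        gcongr
    _ = ENNReal.ofReal (Real.exp (μ * δ - t * ((1 + δ) * μ))) := by
        rw [← ENNReal.ofReal_mul (Real.exp_nonneg _), ← Real.exp_add]
        ring_nf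
    _ ≤ _ := by
        refine ENNReal.ofReal_le_ofReal (Real.exp_le_exp.2 ?_)
        have hlog : 2 * δ / (δ + 2) * ((1 + δ) * μ) ≤ t * ((1 + δ) * μ) := by
          gcongr
          exact Real.le_log_one_add_of_nonneg hδ
        have hcalc : μ * δ - 2 * δ / (δ + 2) * ((1 + δ) * μ) = -(δ ^ 2 * μ) / (2 + δ) := by
          field_simp
          ring
        linarith

end PMF

/-- Upper-tail Chernoff bound used in the unforgeability proof of the OWF-based SRDS:
for a binomial with `m` trials and mean `(1 − 3ε'')·ℓ'` where `2/9 < ε'' < 1/3`, the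
number of successes is at least `ℓ'/3` with probability at most
`exp(−(9ε''−2)²ℓ'/(3(4−9ε'')))`. -/
theorem binomial_chernoff_upper_tail (ε'' : ℝ) (hε0 : 2 / 9 < ε'') (hε1 : ε'' < 1 / 3)
    (ℓ' m : ℕ) (p : ℝ≥0∞) (hp : p ≤ 1)
    (hmean : (m : ℝ) * p.toReal = (1 - 3 * ε'') * (ℓ' : ℝ)) :
    (PMF.binomial p.toNNReal (by simpa using ENNReal.toNNReal_mono ENNReal.one_ne_top hp) m).toOuterMeasure
        {k : Fin (m + 1) | (ℓ' : ℝ) / 3 ≤ (k.val : ℝ)} ≤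
      ENNReal.ofReal (Real.exp (-((9 * ε'' - 2) ^ 2 * (ℓ' : ℝ)) / (3 * (4 - 9 * ε'')))) := by
  set δ : ℝ := (9 * ε'' - 2) / (3 - 9 * ε'') with hδ_def
  have hδ : 0 ≤ δ := div_nonneg (by linarith) (by linarith)
  have hmean' : (m : ℝ) * (p.toNNReal : ℝ) = (1 - 3 * ε'') * ℓ' := hmean
  have hthreshold : (1 + δ) * ((1 - 3 * ε'') * ℓ') = (ℓ' : ℝ) / 3 := by
    have : (3 - 9 * ε'') ≠ 0 := by linarith
    rw [hδ_def]
    field_simp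
    ring
  have hexponent : -(δ ^ 2 * ((1 - 3 * ε'') * ℓ')) / (2 + δ) =
      -((9 * ε'' - 2) ^ 2 * (ℓ' : ℝ)) / (3 * (4 - 9 * ε'')) := by
    have : (3 - 9 * ε'') ≠ 0 := by linarith
    have : (4 - 9 * ε'') ≠ 0 := by linarith
    rw [div_eq_div_iff (by linarith) (by positivity), hδ_def]
    field_simp
    ring
  have := PMF.binomial_toOuterMeasure_ge_le_exp p.toNNReal
    (by simpa using ENNReal.toNNReal_mono ENNReal.one_ne_top hp) m hδ
  rwa [hmean', hthreshold, hexponent] at this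
end

section
/- Let β be a type, h : β → β → β, d : ℕ, f : (Fin d → Bool) → β, x : Fin d → Bool, v : β, and p : Fin d → β. If mver h d x p v = mroot h d f and v ≠ f x, then h has a collision: there exist u₁, u₂, w₁, w₂ : β with (u₁, u₂) ≠ (w₁, w₂) and h u₁ u₂ = h w₁ w₂. -/
/-- Merkle root of a perfect binary tree of depth `d` with leaves `f`. -/
def mroot {β : Type*} (h : β → β → β) : (d : ℕ) → ((Fin d → Bool) → β) → β
  | 0, f => f (fun i => i.elim0)
  | d + 1, f =>
      h (mroot h d (fun q => f (Fin.cons false q)))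
        (mroot h d (fun q => f (Fin.cons true q)))

/-- Evaluation of a claimed leaf value `v` at index `x` along a sibling path `p`
(ordered from the root down). -/
def mver {β : Type*} (h : β → β → β) :
    (d : ℕ) → (Fin d → Bool) → (Fin d → β) → β → β
  | 0, _, _, v => v
  | d + 1, x, p, v =>
      if x 0 = false then h (mver h d (Fin.tail x) (Fin.tail p) v) (p 0)
      else h (p 0) (mver h d (Fin.tail x) (Fin.tail p) v)

/-- Soundness of the Merkle hash proof system: an accepted opening of a leaf to a
value different from the committed one exhibits an explicit collision of the
compression function `h`. -/
theorem merkle_soundness {β : Type*} (h : β → β → β) (d : ℕ)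
    (f : (Fin d → Bool) → β) (x : Fin d → Bool) (v : β) (p : Fin d → β)
    (hver : mver h d x p v = mroot h d f) (hne : v ≠ f x) :
    ∃ u₁ u₂ w₁ w₂ : β, (u₁, u₂) ≠ (w₁, w₂) ∧ h u₁ u₂ = h w₁ w₂ := by
  induction d with
  | zero =>
    exfalso
    apply hne
    have hx : x = fun i => i.elim0 := funext fun i => i.elim0
    simpa [mver, mroot, hx] using hver
  | succ d ih =>
    have hx : x = Fin.cons (x 0) (Fin.tail x) := (Fin.cons_self_tail x).symm
    cases hx0 : x 0 with
    | false =>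
      simp only [mver, mroot, hx0, if_pos rfl] at hver
      by_cases hc : (mver h d (Fin.tail x) (Fin.tail p) v, p 0) =
          (mroot h d (fun q => f (Fin.cons false q)),
           mroot h d (fun q => f (Fin.cons true q)))
      · have h1 : mver h d (Fin.tail x) (Fin.tail p) v =
            mroot h d (fun q => f (Fin.cons false q)) := congrArg Prod.fst hc
        refine ih (fun q => f (Fin.cons false q)) (Fin.tail x) (Fin.tail p) h1 ?_
        intro hv
        apply hne
        rw [hv, hx, hx0]; simp [Fin.tail_cons]
      · exact ⟨_, _, _, _, hc, hver⟩
    | true =>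
      simp only [mver, mroot, hx0, Bool.true_eq_false, if_false] at hver
      by_cases hc : (p 0, mver h d (Fin.tail x) (Fin.tail p) v) =
          (mroot h d (fun q => f (Fin.cons false q)),
           mroot h d (fun q => f (Fin.cons true q)))
      · have h1 : mver h d (Fin.tail x) (Fin.tail p) v =
            mroot h d (fun q => f (Fin.cons true q)) := congrArg Prod.snd hc
        refine ih (fun q => f (Fin.cons true q)) (Fin.tail x) (Fin.tail p) h1 ?_
        intro hv
        apply hne
        rw [hv, hx, hx0]; simp [Fin.tail_cons]
      · exact ⟨_, _, _, _, hc, hver⟩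
end
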